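/- For every proof-relevant JLC-frame, the strong endofunctor ◇ of Psh(W) = W ⥤ Type is a strong semimonad: the maps join_{P,w} : (◇◇P)(w) → (◇P)(w) given by join(v, m, (v', m', p)) = (v', transR m m', p) form a natural transformation ◇◇ ⟶ ◇ (natural in w and in P), which is associative (join_P ∘ join_{◇P} = join_P ∘ ◇(join_P) as maps ◇◇◇P ⟶ ◇P) and strong, i.e. join_{P×Q} ∘ ◇(σ_{P,Q}) ∘ σ_{P,◇Q} = σ_{P,Q} ∘ (id_P × join_Q) for all presheaves P, Q. -/

import Mathlib

open CategoryTheory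

/-- A proof-relevant SLC-frame: a category `W` of worlds, a proof-relevant
modal relation `R`, an inclusion `incl` of `R` into the morphisms of `W`, and
a forward-confluence operation `factor` (split into the resulting world
`factorW`, the modal proof `factor₁` and the intuitionistic proof `factor₂`),
subject to the coherence laws. -/
structure SLCFrame where
  W : Type
  [instCat : Category.{0} W]
  R : W → W → Type
  incl : ∀ {w v : W}, R w v → (w ⟶ v)
  factorW : ∀ {w w' v : W}, (w ⟶ w') → R w v → W
  factor₁ : ∀ {w w' v : W} (i : w ⟶ w') (m : R w v), R w' (factorW i m)
  factor₂ : ∀ {w w' v : W} (i : w ⟶ w') (m : R w v), v ⟶ factorW i m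
  factorW_id : ∀ {w v : W} (m : R w v), factorW (𝟙 w) m = v
  factor₁_id : ∀ {w v : W} (m : R w v), HEq (factor₁ (𝟙 w) m) m
  factor₂_id : ∀ {w v : W} (m : R w v), HEq (factor₂ (𝟙 w) m) (𝟙 v)
  factorW_comp : ∀ {w w' w'' v : W} (i : w ⟶ w') (j : w' ⟶ w'') (m : R w v),
    factorW (i ≫ j) m = factorW j (factor₁ i m)
  factor₁_comp : ∀ {w w' w'' v : W} (i : w ⟶ w') (j : w' ⟶ w'') (m : R w v),
    HEq (factor₁ (i ≫ j) m) (factor₁ j (factor₁ i m))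
  factor₂_comp : ∀ {w w' w'' v : W} (i : w ⟶ w') (j : w' ⟶ w'') (m : R w v),
    HEq (factor₂ (i ≫ j) m) (factor₂ i m ≫ factor₂ j (factor₁ i m))
  incl_natural : ∀ {w w' v : W} (i : w ⟶ w') (m : R w v),
    incl m ≫ factor₂ i m = i ≫ incl (factor₁ i m)

attribute [instance] SLCFrame.instCat

variable (F : SLCFrame)

/-- The object part of the presheaf `◇P`: `(◇P)(w) = Σ v, (w R v) × P(v)`. -/
def DiaObj (P : F.W ⥤ Type) (w : F.W) : Type :=
  Σ v : F.W, F.R w v × P.obj v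

/-- Transport of `◇P` along `i : w ⟶ w'`, via `factor`. -/
def DiaMap (P : F.W ⥤ Type) {w w' : F.W} (i : w ⟶ w') :
    DiaObj F P w → DiaObj F P w' :=
  fun x => ⟨F.factorW i x.2.1, F.factor₁ i x.2.1, P.map (F.factor₂ i x.2.1) x.2.2⟩

/-- The action of `◇` on a natural transformation `f : P ⟶ Q`, componentwise. -/
def DiaHom {P Q : F.W ⥤ Type} (f : P ⟶ Q) (w : F.W) :
    DiaObj F P w → DiaObj F Q w :=
  fun x => ⟨x.1, x.2.1, f.app x.1 x.2.2⟩

/-- The pointwise product of presheaves. -/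
def ProdPsh (P Q : F.W ⥤ Type) : F.W ⥤ Type where
  obj w := P.obj w × Q.obj w
  map i := TypeCat.ofHom (fun x : P.obj _ × Q.obj _ => (P.map i x.1, Q.map i x.2))
  map_id := by intro w; ext x <;> simp
  map_comp := by intro w w' w'' i j; ext x <;> simp

/-- The terminal (unit) presheaf. -/
def UnitPsh : F.W ⥤ Type where
  obj _ := PUnit
  map _ := TypeCat.ofHom (fun x => x)

/-- The strength map `σ_{P,Q,w} : P(w) × (◇Q)(w) → (◇(P × Q))(w)`. -/
def Strength (P Q : F.W ⥤ Type) (w : F.W) :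
    P.obj w × DiaObj F Q w → DiaObj F (ProdPsh F P Q) w :=
  fun x => ⟨x.2.1, x.2.2.1, (P.map (F.incl x.2.2.1) x.1, x.2.2.2)⟩

/-- A proof-relevant JLC-frame: an SLC-frame further equipped with a
transitivity operation `transR` for `R`, coherent with `factor` and `incl`. -/
structure JLCFrame extends SLCFrame where
  transR : ∀ {u v w : W}, R u v → R v w → R u w
  factorW_trans : ∀ {w w' u v : W} (i : w ⟶ w') (m₁ : R w u) (m₂ : R u v),
    factorW i (transR m₁ m₂) = factorW (factor₂ i m₁) m₂
  factor₁_trans : ∀ {w w' u v : W} (i : w ⟶ w') (m₁ : R w u) (m₂ : R u v),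
    HEq (factor₁ i (transR m₁ m₂))
        (transR (factor₁ i m₁) (factor₁ (factor₂ i m₁) m₂))
  factor₂_trans : ∀ {w w' u v : W} (i : w ⟶ w') (m₁ : R w u) (m₂ : R u v),
    HEq (factor₂ i (transR m₁ m₂)) (factor₂ (factor₂ i m₁) m₂)
  transR_assoc : ∀ {u v w x : W} (m₁ : R u v) (m₂ : R v w) (m₃ : R w x),
    transR (transR m₁ m₂) m₃ = transR m₁ (transR m₂ m₃)
  incl_trans : ∀ {u v w : W} (m₁ : R u v) (m₂ : R v w),
    incl (transR m₁ m₂) = incl m₁ ≫ incl m₂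

/-- The object part of `◇◇P`. -/
def Dia2Obj (F : SLCFrame) (P : F.W ⥤ Type) (w : F.W) : Type :=
  Σ v : F.W, F.R w v × DiaObj F P v

/-- Transport of `◇◇P` along `i : w ⟶ w'`. -/
def Dia2Map (F : SLCFrame) (P : F.W ⥤ Type) {w w' : F.W} (i : w ⟶ w') :
    Dia2Obj F P w → Dia2Obj F P w' :=
  fun x => ⟨F.factorW i x.2.1, F.factor₁ i x.2.1, DiaMap F P (F.factor₂ i x.2.1) x.2.2⟩

/-- The object part of `◇◇◇P`. -/
def Dia3Obj (F : SLCFrame) (P : F.W ⥤ Type) (w : F.W) : Type :=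
  Σ v : F.W, F.R w v × Dia2Obj F P v

/-- The join map `join_{P,w} : (◇◇P)(w) → (◇P)(w)`,
`(v, m, (v', m', p)) ↦ (v', transR m m', p)`. -/
def Join (F : JLCFrame) (P : F.W ⥤ Type) (w : F.W) :
    Dia2Obj F.toSLCFrame P w → DiaObj F.toSLCFrame P w :=
  fun x => ⟨x.2.2.1, F.transR x.2.1 x.2.2.2.1, x.2.2.2.2⟩

/-!
Every law of a strong semimonad reduces to one coherence law of the JLC-frame: naturality of
`join` in the world to the three `factor_trans` laws (the factorisation of a composite modal
step is computed one step at a time), associativity to `transR_assoc`, and strength to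
`incl_trans` together with functoriality of `P`; naturality in the presheaf holds definitionally.
-/

theorem DiaObj.ext_heq {F : SLCFrame} {P : F.W ⥤ Type} {w v v' : F.W} (hv : v = v')
    {m : F.R w v} {m' : F.R w v'} (hm : m ≍ m') {p : P.obj v} {p' : P.obj v'} (hp : p ≍ p') :
    (⟨v, m, p⟩ : DiaObj F P w) = ⟨v', m', p'⟩ := by
  subst hv; cases hm; cases hp; rfl

namespace CategoryTheory.Functor

theorem map_apply_heq {C : Type*} [Category C] (P : C ⥤ Type*) {v a b : C} (hab : a = b)
    {f : v ⟶ a} {g : v ⟶ b} (hfg : f ≍ g) (p : P.obj v) : P.map f p ≍ P.map g p := by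
  subst hab; cases hfg; rfl

end CategoryTheory.Functor

section Join

variable (F : JLCFrame) (P : F.W ⥤ Type)

theorem diaMap_join {w w' : F.W} (i : w ⟶ w') (x : Dia2Obj F.toSLCFrame P w) :
    DiaMap F.toSLCFrame P i (Join F P w x) = Join F P w' (Dia2Map F.toSLCFrame P i x) := by
  obtain ⟨u, m₁, v, m₂, p⟩ := x
  exact DiaObj.ext_heq (F.factorW_trans i m₁ m₂) (F.factor₁_trans i m₁ m₂)
    (P.map_apply_heq (F.factorW_trans i m₁ m₂) (F.factor₂_trans i m₁ m₂) p)

theorem join_assoc (w : F.W) (x : Dia3Obj F.toSLCFrame P w) :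
    Join F P w ⟨x.2.2.1, F.transR x.2.1 x.2.2.2.1, x.2.2.2.2⟩ =
      Join F P w ⟨x.1, x.2.1, Join F P x.1 x.2.2⟩ := by
  obtain ⟨u, m₁, v, m₂, t, m₃, p⟩ := x
  simp only [_root_.Join, F.transR_assoc]
  rfl

theorem join_strength (Q : F.W ⥤ Type) (w : F.W) (p : P.obj w) (x : Dia2Obj F.toSLCFrame Q w) :
    Join F (ProdPsh F.toSLCFrame P Q) w
        ⟨x.1, x.2.1, Strength F.toSLCFrame P Q x.1 (P.map (F.incl x.2.1) p, x.2.2)⟩ =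
      Strength F.toSLCFrame P Q w (p, Join F Q w x) := by
  obtain ⟨u, m₁, v, m₂, q⟩ := x
  simp only [_root_.Join, Strength, F.incl_trans, Functor.map_comp]
  rfl

end Join

/-- for every proof-relevant JLC-frame, the strong endofunctor `◇`
of `W ⥤ Type` is a strong semimonad: `join` is a natural transformation
`◇◇ ⟶ ◇` (natural in `w` and in `P`), associative, and strong. -/
theorem dia_strong_semimonad (F : JLCFrame) :
    -- join_P is a natural transformation ◇◇P ⟶ ◇P (naturality in w)
    (∀ (P : F.W ⥤ Type) {w w' : F.W} (i : w ⟶ w') (x : Dia2Obj F.toSLCFrame P w),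
       DiaMap F.toSLCFrame P i (Join F P w x) = Join F P w' (Dia2Map F.toSLCFrame P i x)) ∧
    -- join is natural in P: join_Q ∘ ◇◇f = ◇f ∘ join_P
    (∀ (P Q : F.W ⥤ Type) (f : P ⟶ Q) (w : F.W) (x : Dia2Obj F.toSLCFrame P w),
       DiaHom F.toSLCFrame f w (Join F P w x) =
         Join F Q w ⟨x.1, x.2.1, DiaHom F.toSLCFrame f x.1 x.2.2⟩) ∧
    -- join is associative: join_P ∘ join_{◇P} = join_P ∘ ◇(join_P)
    (∀ (P : F.W ⥤ Type) (w : F.W) (x : Dia3Obj F.toSLCFrame P w),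
       Join F P w ⟨x.2.2.1, F.transR x.2.1 x.2.2.2.1, x.2.2.2.2⟩ =
         Join F P w ⟨x.1, x.2.1, Join F P x.1 x.2.2⟩) ∧
    -- join is strong: join_{P×Q} ∘ ◇(σ_{P,Q}) ∘ σ_{P,◇Q} = σ_{P,Q} ∘ (id_P × join_Q)
    (∀ (P Q : F.W ⥤ Type) (w : F.W) (p : P.obj w) (x : Dia2Obj F.toSLCFrame Q w),
       Join F (ProdPsh F.toSLCFrame P Q) w
         ⟨x.1, x.2.1, Strength F.toSLCFrame P Q x.1 (P.map (F.incl x.2.1) p, x.2.2)⟩ =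
         Strength F.toSLCFrame P Q w (p, Join F Q w x)) :=
  ⟨fun P _ _ => diaMap_join F P, fun _ _ _ _ _ => rfl, join_assoc F, join_strength F⟩
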